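/- arXiv:1704.07723 — 4 statements merged into one kernel-verified Lean document; each statement's English description precedes it below -/
import Mathlib

section
/- For an infinite hypernatural n, the hyperreal (1 - 1/n)^n is infinitely close to 1/e and is not infinitesimal. -/
/-! An infinite hypernatural is represented by a sequence of naturals tending to infinity along the
ultrafilter, so `(1 - 1/n)^n` is represented by the standard sequence `(1 - 1/k)^k → e⁻¹` composed
with it. Its standard part is therefore `e⁻¹`, which is nonzero. -/

open Filter Germ Topology

namespace Filter.Germ

variable {α β γ δ : Type*}

theorem Tendsto.map {l : Filter α} {lb : Filter β} {lc : Filter γ} {x : Germ l β} {f : β → γ}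
    (hx : x.Tendsto lb) (hf : Tendsto f lb lc) : (x.map f).Tendsto lc := by
  induction x using Germ.inductionOn with
  | h g => exact hf.comp hx

theorem map₂_map_right {l : Filter α} (op : β → γ → δ) (x : Germ l β) (f : β → γ) :
    map₂ op x (x.map f) = x.map fun b => op b (f b) := by
  induction x using Germ.inductionOn with
  | h g => rfl

theorem tendsto_atTop_of_forall_coe_lt [Preorder β] {φ : Ultrafilter α} {x : Germ (φ : Filter α) β}
    (hx : ∀ b : β, (b : Germ (φ : Filter α) β) < x) : x.Tendsto atTop := by
  induction x using Germ.inductionOn with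
  | h g => exact tendsto_atTop.2 fun b => (coe_lt.1 (hx b)).mono fun _ => le_of_lt

end Filter.Germ

theorem Real.tendsto_one_sub_div_pow_exp (t : ℝ) :
    Tendsto (fun k : ℕ => (1 - t / k) ^ k) atTop (𝓝 (Real.exp (-t))) := by
  simpa only [neg_div, ← sub_eq_add_neg] using Real.tendsto_one_add_div_pow_exp (-t)

/-- For an infinite hypernatural `n`, the hyperreal `(1 - 1/n)^n` (interpreted via the
ultrapower extension of `(k, x) ↦ (1-x)^k`) is infinitely close to `1/e` and is not
infinitesimal. -/
theorem one_sub_inv_pow_infinite_index (n : Germ (hyperfilter ℕ : Filter ℕ) ℕ)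
    (hn : ∀ m : ℕ, (m : Germ (hyperfilter ℕ : Filter ℕ) ℕ) < n) :
    Hyperreal.Infinitesimal
      ((Germ.map₂ (fun (k : ℕ) (x : ℝ) => (1 - x) ^ k) n (n.map fun k : ℕ => 1 / (k:ℝ)) : ℝ*) -
        (↑((Real.exp 1)⁻¹ : ℝ) : Germ (hyperfilter ℕ : Filter ℕ) ℝ)) ∧
    ¬ Hyperreal.Infinitesimal
      (Germ.map₂ (fun (k : ℕ) (x : ℝ) => (1 - x) ^ k) n (n.map fun k : ℕ => 1 / (k:ℝ))) := by
  have hlim : (n.map fun k : ℕ => (1 - 1 / (k : ℝ)) ^ k).Tendsto (𝓝 (Real.exp 1)⁻¹) := by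
    rw [← Real.exp_neg]
    exact (tendsto_atTop_of_forall_coe_lt hn).map (Real.tendsto_one_sub_div_pow_exp 1)
  have hst : Hyperreal.IsSt (Germ.map₂ (fun (k : ℕ) (x : ℝ) => (1 - x) ^ k) n
      (n.map fun k : ℕ => 1 / (k:ℝ))) (Real.exp 1)⁻¹ := by
    rw [Germ.map₂_map_right]
    exact Hyperreal.isSt_iff_tendsto.2 hlim
  exact ⟨hst.infinitesimal_sub, fun h0 => inv_ne_zero (Real.exp_ne_zero 1) (hst.unique h0)⟩
end

section
/- For every x in the open interval (0, 2π), the series Σ_{k=1}^∞ sin(k x)/k converges to (π - x)/2. -/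
/-!
Put `z = e^{ix}`, so the partial sums are the imaginary parts of those of `∑ zᵏ/k`. Since
`|z| = 1` and `z ≠ 1`, the partial sums of `∑ zᵏ` are bounded, and Dirichlet's test makes
`∑ zᵏ/k` converge; by Abel's limit theorem its sum is the radial limit of `-log (1 - z r)`, which
is `-log (1 - z)` by continuity of `log` off the negative real axis. Finally
`1 - e^{ix} = 2 sin (x/2) e^{i(x - π)/2}` with `sin (x/2) > 0`, so `Im (-log (1 - z)) = (π - x)/2`.
-/

open Filter Topology Finset

theorem norm_geom_sum_le_of_norm_le_one {𝕜 : Type*} [NormedField 𝕜] {z : 𝕜} (hz : ‖z‖ ≤ 1)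
    (hz1 : z ≠ 1) (n : ℕ) : ‖∑ i ∈ range n, z ^ i‖ ≤ 2 / ‖1 - z‖ := by
  have hpos : 0 < ‖1 - z‖ := norm_pos_iff.2 (sub_ne_zero.2 hz1.symm)
  rw [geom_sum_eq hz1, ← neg_div_neg_eq, neg_sub, neg_sub, norm_div]
  gcongr
  calc ‖1 - z ^ n‖ ≤ ‖(1 : 𝕜)‖ + ‖z ^ n‖ := norm_sub_le _ _
    _ ≤ 2 := by rw [norm_one, norm_pow]; linarith [pow_le_one₀ (norm_nonneg z) hz (n := n)]

theorem Real.sin_half_pos {x : ℝ} (h0 : 0 < x) (h2 : x < 2 * Real.pi) : 0 < Real.sin (x / 2) :=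
  Real.sin_pos_of_pos_of_lt_pi (by linarith) (by linarith)

namespace Complex

theorem one_sub_mem_slitPlane_of_norm_le_one {z : ℂ} (hz : ‖z‖ ≤ 1) (hz1 : z ≠ 1) :
    1 - z ∈ slitPlane := by
  suffices z.re < 1 by simpa [mem_slitPlane_iff] using Or.inl this
  refine (re_le_norm z).trans hz |>.lt_of_ne fun hre => hz1 (Complex.ext hre ?_)
  have : |z.re| = ‖z‖ := le_antisymm (abs_re_le_norm z) (by rwa [hre, abs_one])
  simpa using abs_re_eq_norm.1 this

-- The `k = 0` term is `1 / 0 = 0`, so these are the partial sums of `∑_{k ≥ 1} zᵏ / k`.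
theorem cauchySeq_sum_range_taylorSeries_neg_log {z : ℂ} (hz : ‖z‖ ≤ 1) (hz1 : z ≠ 1) :
    CauchySeq fun n => ∑ k ∈ range n, z ^ k / k := by
  have hbound (n : ℕ) : ‖∑ i ∈ range n, z ^ (i + 1)‖ ≤ 2 / ‖1 - z‖ := by
    simp_rw [pow_succ', ← mul_sum, norm_mul]
    exact (mul_le_of_le_one_left (norm_nonneg _) hz).trans
      (norm_geom_sum_le_of_norm_le_one hz hz1 n)
  have hanti : Antitone fun n : ℕ => 1 / ((n : ℝ) + 1) := fun _ _ h => by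
    apply one_div_le_one_div_of_le (by positivity); gcongr
  have hdirichlet := hanti.cauchySeq_series_mul_of_tendsto_zero_of_bounded
    tendsto_one_div_add_atTop_nhds_zero_nat hbound
  rw [← cauchySeq_shift 1]
  convert hdirichlet using 2 with n
  rw [sum_range_succ']
  simp [div_eq_inv_mul]

theorem tendsto_sum_range_taylorSeries_neg_log {z : ℂ} (hz : ‖z‖ ≤ 1) (hz1 : z ≠ 1) :
    Tendsto (fun n => ∑ k ∈ range n, z ^ k / k) atTop (𝓝 (-log (1 - z))) := by
  obtain ⟨l, hl⟩ := cauchySeq_tendsto_of_complete (cauchySeq_sum_range_taylorSeries_neg_log hz hz1)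
  have habel := tendsto_tsum_powerSeries_nhdsWithin_lt hl
  rw [tendsto_map'_iff] at habel
  have hradial : ∀ᶠ r : ℝ in 𝓝[<] 1,
      ∑' n : ℕ, z ^ n / n * (r : ℂ) ^ n = -log (1 - z * r) := by
    filter_upwards [Ioo_mem_nhdsLT zero_lt_one] with r hr
    have hzr : ‖z * r‖ < 1 := by
      rw [norm_mul, norm_real, Real.norm_of_nonneg hr.1.le]
      exact (mul_le_of_le_one_left hr.1.le hz).trans_lt hr.2
    simp_rw [← (hasSum_taylorSeries_neg_log hzr).tsum_eq, mul_pow, div_mul_eq_mul_div]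
  have hcont : Tendsto (fun r : ℝ => -log (1 - z * r)) (𝓝[<] 1) (𝓝 (-log (1 - z))) := by
    have : ContinuousAt (fun r : ℝ => -log (1 - z * r)) 1 :=
      ((continuousAt_clog (by simpa using one_sub_mem_slitPlane_of_norm_le_one hz hz1)).comp
        (by fun_prop)).neg
    simpa using this.tendsto.mono_left nhdsWithin_le_nhds
  rwa [tendsto_nhds_unique (habel.congr' hradial) hcont] at hl

theorem one_sub_exp_mul_I (x : ℝ) :
    1 - exp (x * I) = (2 * Real.sin (x / 2) : ℝ) * exp (((x - Real.pi) / 2 : ℝ) * I) := by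
  set w := exp ((x / 2 : ℝ) * I)
  have hw : w ≠ 0 := exp_ne_zero _
  have hsq : exp (x * I) = w ^ 2 := by
    rw [← exp_nat_mul]
    congr 1
    push_cast
    ring
  have hshift : exp (((x - Real.pi) / 2 : ℝ) * I) = -I * w := by
    rw [show (((x - Real.pi) / 2 : ℝ) : ℂ) * I = (x / 2 : ℝ) * I - Real.pi / 2 * I by
      push_cast; ring, exp_sub, exp_pi_div_two_mul_I, div_I]
    ring
  have hsin : ((Real.sin (x / 2) : ℝ) : ℂ) = (w - w⁻¹) / (2 * I) := by
    rw [ofReal_sin, sin, neg_mul, exp_neg]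
    field_simp
    rw [I_sq]
    ring
  rw [hsq, hshift, ofReal_mul, ofReal_ofNat, hsin]
  field_simp
  ring

theorem exp_mul_I_ne_one {x : ℝ} (h0 : 0 < x) (h2 : x < 2 * Real.pi) : exp (x * I) ≠ 1 := by
  rw [ne_comm, ← sub_ne_zero, one_sub_exp_mul_I]
  exact mul_ne_zero (mod_cast (mul_pos two_pos (Real.sin_half_pos h0 h2)).ne') (exp_ne_zero _)

theorem arg_one_sub_exp_mul_I {x : ℝ} (h0 : 0 < x) (h2 : x < 2 * Real.pi) :
    arg (1 - exp (x * I)) = (x - Real.pi) / 2 := by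
  rw [one_sub_exp_mul_I, arg_real_mul _ (mul_pos two_pos (Real.sin_half_pos h0 h2)),
    arg_exp_mul_I, toIocMod_eq_self]
  constructor <;> linarith

end Complex

open Complex in
/-- For `0 < x < 2π`, the sawtooth series `Σ_{k=1}^∞ sin(kx)/k` converges to `(π - x)/2`. -/
theorem sawtooth_series_sum (x : ℝ) (h0 : 0 < x) (h2 : x < 2 * Real.pi) :
    Tendsto (fun n : ℕ => ∑ k ∈ Finset.Icc 1 n, Real.sin ((k : ℝ) * x) / (k : ℝ))
      atTop (nhds ((Real.pi - x) / 2)) := by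
  have hlim := (continuous_im.tendsto _).comp <|
    tendsto_sum_range_taylorSeries_neg_log (norm_exp_ofReal_mul_I x).le (exp_mul_I_ne_one h0 h2)
  have hval : (-log (1 - exp (x * I))).im = (Real.pi - x) / 2 := by
    rw [neg_im, log_im, arg_one_sub_exp_mul_I h0 h2]
    ring
  have hterm (k : ℕ) : (exp (x * I) ^ k / k).im = Real.sin (k * x) / k := by
    rw [← exp_nat_mul, div_natCast_im,
      show (k : ℂ) * (x * I) = (k * x : ℝ) * I by push_cast; ring, exp_ofReal_mul_I_im]
  rw [hval] at hlim
  refine (hlim.comp (tendsto_add_atTop_nat 1)).congr fun n => ?_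
  simp only [Function.comp_apply, im_sum]
  rw [range_eq_Ico, sum_eq_sum_Ico_succ_bot n.succ_pos]
  simp [hterm, Ico_add_one_right_eq_Icc]
end

section
/- Hyperreal sum theorem: if u_k : ℝ → ℝ are continuous on [a,b], and for all infinite hypernaturals n' > n and all hyperreal x in *[a,b] the hyperfinite sum Σ_{k=n}^{n'-1} u*_k(x) is infinitesimal, then Σ u_k converges uniformly on [a,b] and its sum is continuous on [a,b]. -/
open Filter Germ Topology

/-! If the partial sums were not uniformly Cauchy on `[a,b]`, there would be an `ε > 0`, indices
`n_N < n'_N` tending to infinity and points `x_N ∈ [a,b]` with `|s_{n'_N}(x_N) - s_{n_N}(x_N)| ≥ ε`.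
Their germs are infinite hypernaturals `n < n'` and a point of `*[a,b]` at which `s*_{n'} - s*_n`
is not infinitesimal. Completeness of `ℝ` then yields a uniform limit, continuous as a uniform
limit of continuous functions. -/

set_option linter.deprecated false

theorem Filter.Germ.natCast_lt_coe_of_tendsto_atTop {f : ℕ → ℕ} (hf : Tendsto f atTop atTop)
    (m : ℕ) : (m : Germ (hyperfilter ℕ : Filter ℕ) ℕ) < f :=
  Germ.coe_lt.mpr ((hf.eventually_gt_atTop m).filter_mono Nat.hyperfilter_le_atTop)

theorem Hyperreal.eventually_abs_lt_of_infinitesimal_ofSeq {g : ℕ → ℝ}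
    (hg : Hyperreal.Infinitesimal (Hyperreal.ofSeq g)) {ε : ℝ} (hε : 0 < ε) :
    ∀ᶠ N in hyperfilter ℕ, |g N| < ε := by
  have hg' : Tendsto g (hyperfilter ℕ) (𝓝 0) := Hyperreal.isSt_iff_tendsto.mp hg
  simpa [Real.dist_eq] using hg'.eventually (Metric.ball_mem_nhds 0 hε)

theorem uniformCauchySeqOn_of_infinitesimal_sub {α : Type*} {F : ℕ → α → ℝ} {S : Set α}
    (h : ∀ n n' : Germ (hyperfilter ℕ : Filter ℕ) ℕ,
      (∀ m : ℕ, (m : Germ (hyperfilter ℕ : Filter ℕ) ℕ) < n) →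
      (∀ m : ℕ, (m : Germ (hyperfilter ℕ : Filter ℕ) ℕ) < n') →
      n < n' →
      ∀ x : Germ (hyperfilter ℕ : Filter ℕ) α, x.LiftPred (· ∈ S) →
        Hyperreal.Infinitesimal (Germ.map₂ F n' x - Germ.map₂ F n x)) :
    UniformCauchySeqOn F atTop S := by
  rw [Metric.uniformCauchySeqOn_iff]
  by_contra! hbad
  obtain ⟨ε, hε, hbad⟩ := hbad
  choose m hm k hk x hx hεle using hbad
  set n := fun N => min (m N) (k N)
  set n' := fun N => max (m N) (k N)
  have hne : ∀ N, m N ≠ k N := fun N heq => by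
    have := hεle N
    rw [heq, dist_self] at this
    linarith
  have hlt : ∀ N, n N < n' N := fun N => min_lt_max.mpr (hne N)
  have hn : Tendsto n atTop atTop :=
    tendsto_atTop_mono (fun N => le_min (hm N) (hk N)) tendsto_id
  have hn' : Tendsto n' atTop atTop := tendsto_atTop_mono (fun N => (hlt N).le) hn
  have hinf := h n n' (Germ.natCast_lt_coe_of_tendsto_atTop hn)
    (Germ.natCast_lt_coe_of_tendsto_atTop hn') (Germ.coe_lt.mpr (.of_forall hlt))
    x (Germ.liftPred_coe.mpr (.of_forall hx))
  obtain ⟨N, hN⟩ :=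
    (Hyperreal.eventually_abs_lt_of_infinitesimal_ofSeq (g := fun N =>
      F (n' N) (x N) - F (n N) (x N)) hinf hε).exists
  have hdist : dist (F (m N) (x N)) (F (k N) (x N)) = |F (n' N) (x N) - F (n N) (x N)| := by
    rcases le_total (m N) (k N) with hmk | hkm
    · simp [n, n', hmk, Real.dist_eq, abs_sub_comm]
    · simp [n, n', hkm, Real.dist_eq]
  linarith [hεle N]

theorem UniformCauchySeqOn.exists_tendstoUniformlyOn {ι α β : Type*} [UniformSpace β]
    [CompleteSpace β] [Nonempty β] {F : ι → α → β} {p : Filter ι} [NeBot p] {s : Set α}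
    (hF : UniformCauchySeqOn F p s) : ∃ f : α → β, TendstoUniformlyOn F f p s :=
  ⟨fun x => limUnder p (F · x), hF.tendstoUniformlyOn_of_tendsto fun _ hx =>
    tendsto_nhds_limUnder (CompleteSpace.complete (hF.cauchy_map hx))⟩

/-- Hyperreal sum theorem: if each `u k` is continuous on `[a,b]` and for all infinite
hypernaturals `n' > n` and all hyperreal `x` in `*[a,b]` the hyperfinite sum
`Σ_{k=n}^{n'-1} u*_k(x) = s*_{n'}(x) - s*_n(x)` is infinitesimal, then the partial sums
converge uniformly on `[a,b]` to a limit which is continuous on `[a,b]`. -/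
theorem hyperreal_sum_theorem (u : ℕ → ℝ → ℝ) (a b : ℝ)
    (hcont : ∀ k, ContinuousOn (u k) (Set.Icc a b))
    (hyp : ∀ n n' : Germ (hyperfilter ℕ : Filter ℕ) ℕ,
      (∀ m : ℕ, (m : Germ (hyperfilter ℕ : Filter ℕ) ℕ) < n) →
      (∀ m : ℕ, (m : Germ (hyperfilter ℕ : Filter ℕ) ℕ) < n') →
      n < n' →
      ∀ x : ℝ*, x.LiftPred (· ∈ Set.Icc a b) →
        Hyperreal.Infinitesimal
          (Germ.map₂ (fun (m : ℕ) (y : ℝ) => ∑ k ∈ Finset.range m, u k y) n' x -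
            Germ.map₂ (fun (m : ℕ) (y : ℝ) => ∑ k ∈ Finset.range m, u k y) n x)) :
    ∃ s : ℝ → ℝ,
      TendstoUniformlyOn (fun (m : ℕ) (y : ℝ) => ∑ k ∈ Finset.range m, u k y) s atTop
        (Set.Icc a b) ∧
      ContinuousOn s (Set.Icc a b) := by
  obtain ⟨s, hs⟩ := (uniformCauchySeqOn_of_infinitesimal_sub hyp).exists_tendstoUniformlyOn
  exact ⟨s, hs, hs.continuousOn (.of_forall fun m => continuousOn_finset_sum _ fun k _ => hcont k)⟩
end

section
/- A series of real functions Σ u_k converges uniformly on B ⊆ ℝ if and only if for all infinite hypernaturals n < n' and all hyperreal x in the extension *B, the difference s*_{n'}(x) - s*_n(x) of extended partial sums is infinitesimal. -/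
/-!
A hypernatural is infinite exactly when a representing sequence tends to infinity along the
ultrafilter, and a hyperreal is infinitesimal exactly when its representing sequence tends to
`0` along it. Hence the ε-N condition immediately yields the infinitesimal differences, while
conversely a failure of uniform Cauchyness at some `ε` provides, for every `N`, indices
`N < f N < g N` and a point `ξ N ∈ B` with `ε ≤ |s_{g N}(ξ N) - s_{f N}(ξ N)|`; these sequences
define infinite hypernaturals and a point of `*B` at which the difference is not infinitesimal.
-/

open Filter Germ Topology

theorem Filter.Germ.forall_natCast_lt_coe_iff_tendsto_atTop {α : Type*} {φ : Ultrafilter α}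
    {f : α → ℕ} : (∀ m : ℕ, (m : Germ (φ : Filter α) ℕ) < f) ↔ Tendsto f φ atTop :=
  ⟨fun h ↦ tendsto_atTop.2 fun m ↦ (coe_lt.1 (h m)).mono fun _ ↦ le_of_lt,
    fun h m ↦ coe_lt.2 (h.eventually_gt_atTop m)⟩

section UniformCauchy

variable {X : Type*} {F : ℕ → X → ℝ} {B : Set X}

theorem forall_abs_sub_lt_of_forall_lt {ε : ℝ} (hε : 0 < ε) {N : ℕ}
    (h : ∀ n n' : ℕ, N < n → n < n' → ∀ x ∈ B, |F n' x - F n x| < ε) :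
    ∀ n n' : ℕ, N < n → N < n' → ∀ x ∈ B, |F n' x - F n x| < ε := by
  intro n n' hn hn' x hx
  rcases lt_trichotomy n n' with hlt | rfl | hgt
  · exact h n n' hn hlt x hx
  · simpa using hε
  · rw [abs_sub_comm]
    exact h n' n hn' hgt x hx

theorem tendsto_sub_comp_of_uniformCauchy {ι : Type*} {l : Filter ι}
    (hF : ∀ ε : ℝ, 0 < ε → ∃ N : ℕ, ∀ n n' : ℕ, N < n → N < n' → ∀ x ∈ B,
      |F n' x - F n x| < ε)
    {f g : ι → ℕ} {ξ : ι → X} (hf : Tendsto f l atTop) (hg : Tendsto g l atTop)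
    (hξ : ∀ᶠ i in l, ξ i ∈ B) :
    Tendsto (fun i ↦ F (g i) (ξ i) - F (f i) (ξ i)) l (𝓝 0) := by
  refine Metric.tendsto_nhds.2 fun ε hε ↦ ?_
  obtain ⟨N, hN⟩ := hF ε hε
  filter_upwards [hf.eventually_gt_atTop N, hg.eventually_gt_atTop N, hξ] with i hfi hgi hξi
  rw [Real.dist_0_eq_abs]
  exact hN _ _ hfi hgi _ hξi

theorem uniformCauchy_of_tendsto_sub_comp {l : Filter ℕ} [l.NeBot] (hl : l ≤ atTop)
    (h : ∀ (f g : ℕ → ℕ) (ξ : ℕ → X), Tendsto f l atTop → Tendsto g l atTop →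
      (∀ i, f i < g i) → (∀ i, ξ i ∈ B) →
      Tendsto (fun i ↦ F (g i) (ξ i) - F (f i) (ξ i)) l (𝓝 0)) :
    ∀ ε : ℝ, 0 < ε → ∃ N : ℕ, ∀ n n' : ℕ, N < n → N < n' → ∀ x ∈ B,
      |F n' x - F n x| < ε := by
  intro ε hε
  suffices ∃ N : ℕ, ∀ n n' : ℕ, N < n → n < n' → ∀ x ∈ B, |F n' x - F n x| < ε by
    obtain ⟨N, hN⟩ := this
    exact ⟨N, forall_abs_sub_lt_of_forall_lt hε hN⟩
  by_contra! hbad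
  choose f g hf hfg ξ hξ hge using hbad
  have hf_top : Tendsto f l atTop :=
    (tendsto_atTop_mono (fun N ↦ (hf N).le) tendsto_id).mono_left hl
  have hg_top : Tendsto g l atTop := tendsto_atTop_mono (fun N ↦ (hfg N).le) hf_top
  obtain ⟨i, hi⟩ :=
    (Metric.tendsto_nhds.1 (h f g ξ hf_top hg_top hfg hξ) ε hε).exists
  rw [Real.dist_0_eq_abs] at hi
  exact (hge i).not_gt hi

end UniformCauchy

/-- A series of real functions converges uniformly on `B` (i.e. its partial sums are
uniformly Cauchy on `B`) iff for all infinite hypernaturals `n < n'` and all hyperreal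
`x ∈ *B`, the difference `s*_{n'}(x) - s*_n(x)` of the extended partial sums is
infinitesimal. -/
theorem uniform_cauchy_iff_hyperreal (u : ℕ → ℝ → ℝ) (B : Set ℝ) :
    (∀ ε : ℝ, 0 < ε → ∃ N : ℕ, ∀ n n' : ℕ, N < n → N < n' → ∀ x ∈ B,
      |(∑ k ∈ Finset.range n', u k x) - ∑ k ∈ Finset.range n, u k x| < ε) ↔
    (∀ n n' : Germ (hyperfilter ℕ : Filter ℕ) ℕ,
      (∀ m : ℕ, (m : Germ (hyperfilter ℕ : Filter ℕ) ℕ) < n) →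
      (∀ m : ℕ, (m : Germ (hyperfilter ℕ : Filter ℕ) ℕ) < n') →
      n < n' →
      ∀ x : ℝ*, x.LiftPred (· ∈ B) →
        Hyperreal.Infinitesimal
          (Germ.map₂ (fun (m : ℕ) (y : ℝ) => ∑ k ∈ Finset.range m, u k y) n' x -
            Germ.map₂ (fun (m : ℕ) (y : ℝ) => ∑ k ∈ Finset.range m, u k y) n x)) := by
  constructor
  · intro h n n' hn hn' _ x hx
    induction n, n', x using Germ.inductionOn₃ with | H f g ξ =>
    rw [forall_natCast_lt_coe_iff_tendsto_atTop] at hn hn'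
    exact Hyperreal.isSt_ofSeq_iff_tendsto.2 (tendsto_sub_comp_of_uniformCauchy h hn hn' hx)
  · intro h
    refine uniformCauchy_of_tendsto_sub_comp Nat.hyperfilter_le_atTop
      fun f g ξ hf hg hfg hξ ↦ Hyperreal.isSt_ofSeq_iff_tendsto.1 ?_
    exact h f g (forall_natCast_lt_coe_iff_tendsto_atTop.2 hf)
      (forall_natCast_lt_coe_iff_tendsto_atTop.2 hg) (coe_lt.2 (.of_forall hfg))
      (Hyperreal.ofSeq ξ) (.of_forall hξ)
end
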